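/- arXiv:2008.02681 — 6 statements merged into one kernel-verified Lean document; each statement's English description precedes it below -/
import Mathlib

section
/- For a uniform distribution on the interval [c, d] ⊂ ℝ with c < d, the set α_n = { c + (2j-1)(d-c)/(2n) : 1 ≤ j ≤ n } is an optimal set of n-means, i.e., it minimizes ∫ min_{a∈α} (x-a)² dμ(x) over all sets α ⊂ ℝ of cardinality at most n, and the minimum value (the nth quantization error) is (d-c)²/(12 n²). -/
/-!
Remove the largest point `a` of `α` and cut `[c,d]` at the midpoint `m` between `a` and the
largest remaining point `b`: right of `m` no point is closer than `a`, and left of `m` the points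
of `α \ {a}` are as close as those of `α`. Since `∫ (x - a)² ≥ ℓ³/12` over any interval of
length `ℓ`, induction on `k = card α` gives the lower bound `L³/(12 k²)` over an interval of
length `L`, the inductive step being the convexity inequality
`(u + v)³/(k + 1)² ≤ u³/k² + v³`. The midpoints of `n` equal cells attain the bound, each cell
contributing `(L/n)³/12`.
-/

open Real MeasureTheory

theorem integral_uniform_Icc (f : ℝ → ℝ) {c d : ℝ} (hcd : c ≤ d) :
    ∫ x, f x ∂((ENNReal.ofReal (d - c))⁻¹ • volume.restrict (Set.Icc c d))
      = (d - c)⁻¹ * ∫ x in c..d, f x := by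
  rw [integral_smul_measure, ENNReal.toReal_inv, ENNReal.toReal_ofReal (sub_nonneg.2 hcd),
    intervalIntegral.integral_of_le hcd, integral_Icc_eq_integral_Ioc, smul_eq_mul]

theorem integral_sub_sq (u v m : ℝ) :
    ∫ x in u..v, (x - m) ^ 2 = ((v - m) ^ 3 - (u - m) ^ 3) / 3 := by
  rw [intervalIntegral.integral_comp_sub_right (· ^ 2), integral_pow]
  ring

theorem cube_div_twelve_le_integral_sub_sq {u v : ℝ} (huv : u ≤ v) (m : ℝ) :
    (v - u) ^ 3 / 12 ≤ ∫ x in u..v, (x - m) ^ 2 := by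
  rw [integral_sub_sq]
  nlinarith [sq_nonneg (v - m + (u - m)), sub_nonneg.2 huv]

theorem add_cube_div_succ_sq_le {u v k : ℝ} (hu : 0 ≤ u) (hv : 0 ≤ v) (hk : 0 < k) :
    (u + v) ^ 3 / (k + 1) ^ 2 ≤ u ^ 3 / k ^ 2 + v ^ 3 := by
  obtain ⟨p, hp, rfl⟩ : ∃ p, 0 ≤ p ∧ u = k * p := ⟨u / k, by positivity, by field_simp⟩
  rw [div_le_iff₀ (by positivity), show (k * p) ^ 3 / k ^ 2 = k * p ^ 3 by field_simp]
  -- `(k + 1)² (k p³ + v³) - (k p + v)³ = k (p - v)² ((2k + 1) p + (k + 2) v)`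
  nlinarith [mul_nonneg (mul_nonneg hk.le (sq_nonneg (p - v)))
    (by positivity : 0 ≤ (2 * k + 1) * p + (k + 2) * v)]

section SquaredDistance

variable (s : Finset ℝ) (hs : s.Nonempty)

theorem iInf_sub_sq_eq_inf' (x : ℝ) :
    ⨅ a : s, (x - (a : ℝ)) ^ 2 = s.inf' hs fun a => (x - a) ^ 2 := by
  rw [Finset.inf'_eq_csInf_image, sInf_image']
  rfl

theorem continuous_inf'_sub_sq : Continuous fun x => s.inf' hs fun a => (x - a) ^ 2 := by
  fun_prop

theorem integral_inf'_sub_sq_le_sum {u : ℕ → ℝ} (hu : Monotone u) {a : ℕ → ℝ} {n : ℕ}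
    (ha : ∀ i < n, a i ∈ s) :
    ∫ x in u 0..u n, s.inf' hs (fun b => (x - b) ^ 2)
      ≤ ∑ i ∈ Finset.range n, ∫ x in u i..u (i + 1), (x - a i) ^ 2 := by
  have hcont := continuous_inf'_sub_sq s hs
  rw [← intervalIntegral.sum_integral_adjacent_intervals fun i _ => hcont.intervalIntegrable _ _]
  refine Finset.sum_le_sum fun i hi => intervalIntegral.integral_mono_on (hu i.le_succ)
    (hcont.intervalIntegrable _ _)
    ((by fun_prop : Continuous fun x : ℝ => (x - a i) ^ 2).intervalIntegrable _ _)
    fun x _ => s.inf'_le _ (ha i (Finset.mem_range.1 hi))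

theorem cube_div_le_integral_inf'_sub_sq {c d : ℝ} (hcd : c ≤ d) :
    (d - c) ^ 3 / (12 * (s.card : ℝ) ^ 2) ≤ ∫ x in c..d, s.inf' hs fun a => (x - a) ^ 2 := by
  induction s using Finset.induction_on_max generalizing c d with
  | empty => exact absurd hs Finset.not_nonempty_empty
  | insert a s hlt ih =>
    rcases s.eq_empty_or_nonempty with rfl | hs'
    · simpa using cube_div_twelve_le_integral_sub_sq hcd a
    set b := s.max' hs'
    have hba : b < a := hlt b (s.max'_mem hs')
    have hleft : ∀ x, 2 * x ≤ a + b →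
        s.inf' hs' (fun a => (x - a) ^ 2) ≤ (insert a s).inf' hs fun a => (x - a) ^ 2 := by
      intro x hx
      refine Finset.le_inf' _ _ fun y hy => ?_
      rcases Finset.mem_insert.1 hy with rfl | hy
      · exact (s.inf'_le _ (s.max'_mem hs')).trans (by nlinarith)
      · exact s.inf'_le _ hy
    have hright : ∀ x, a + b ≤ 2 * x →
        (x - a) ^ 2 ≤ (insert a s).inf' hs fun a => (x - a) ^ 2 := by
      intro x hx
      refine Finset.le_inf' _ _ fun y hy => ?_
      rcases Finset.mem_insert.1 hy with rfl | hy
      · exact le_rfl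
      · nlinarith [s.le_max' y hy]
    set t := max c (min d ((a + b) / 2))
    have hct : c ≤ t := le_max_left _ _
    have htd : t ≤ d := max_le hcd (min_le_left _ _)
    have hint := (continuous_inf'_sub_sq _ hs).intervalIntegrable (μ := volume)
    have hcard : ((insert a s).card : ℝ) = s.card + 1 := by
      rw [Finset.card_insert_of_notMem fun h => (hlt a h).false, Nat.cast_succ]
    calc (d - c) ^ 3 / (12 * ((insert a s).card : ℝ) ^ 2)
        = ((t - c) + (d - t)) ^ 3 / ((s.card : ℝ) + 1) ^ 2 / 12 := by
          rw [hcard, sub_add_sub_cancel', div_div, mul_comm (((s.card : ℝ) + 1) ^ 2)]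
      _ ≤ ((t - c) ^ 3 / (s.card : ℝ) ^ 2 + (d - t) ^ 3) / 12 := by
        gcongr
        exact add_cube_div_succ_sq_le (by linarith) (by linarith) (by exact_mod_cast hs'.card_pos)
      _ = (t - c) ^ 3 / (12 * (s.card : ℝ) ^ 2) + (d - t) ^ 3 / 12 := by ring
      _ ≤ (∫ x in c..t, s.inf' hs' fun a => (x - a) ^ 2) + ∫ x in t..d, (x - a) ^ 2 :=
        add_le_add (ih hs' hct) (cube_div_twelve_le_integral_sub_sq htd a)
      _ ≤ (∫ x in c..t, (insert a s).inf' hs fun a => (x - a) ^ 2)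
          + ∫ x in t..d, (insert a s).inf' hs fun a => (x - a) ^ 2 := by
        gcongr ?_ + ?_
        · refine intervalIntegral.integral_mono_on_of_le_Ioo hct
            ((continuous_inf'_sub_sq _ hs').intervalIntegrable _ _) (hint _ _)
            fun x hx => hleft x ?_
          have := (lt_min_iff.1 ((lt_max_iff.1 hx.2).resolve_left hx.1.le.not_gt)).2
          linarith
        · refine intervalIntegral.integral_mono_on_of_le_Ioo htd
            ((by fun_prop : Continuous fun x : ℝ => (x - a) ^ 2).intervalIntegrable _ _)
            (hint _ _) fun x hx => hright x ?_
          have := (min_lt_iff.1 (max_lt_iff.1 hx.1).2).resolve_left hx.2.le.not_gt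
          linarith
      _ = ∫ x in c..d, (insert a s).inf' hs fun a => (x - a) ^ 2 :=
        intervalIntegral.integral_add_adjacent_intervals (hint _ _) (hint _ _)

end SquaredDistance

theorem integral_inf'_sub_sq_midpoints_le {c d : ℝ} (hcd : c ≤ d) {n : ℕ} (hn : 1 ≤ n)
    (hS : ((Finset.Icc 1 n).image
      fun j : ℕ => c + (2 * (j : ℝ) - 1) * (d - c) / (2 * n)).Nonempty) :
    ∫ x in c..d, ((Finset.Icc 1 n).image
        fun j : ℕ => c + (2 * (j : ℝ) - 1) * (d - c) / (2 * n)).inf' hS (fun b => (x - b) ^ 2)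
      ≤ (d - c) ^ 3 / (12 * (n : ℝ) ^ 2) := by
  have hn' : (n : ℝ) ≠ 0 := by positivity
  set L := (d - c) / n
  have hu : Monotone fun i : ℕ => c + i * L :=
    monotone_const.add (Nat.mono_cast.mul_const (by positivity))
  have hcell : ∀ i : ℕ, ∫ x in c + i * L..c + ↑(i + 1) * L,
      (x - (c + (2 * ((i + 1 : ℕ) : ℝ) - 1) * (d - c) / (2 * n))) ^ 2 = L ^ 3 / 12 := by
    intro i
    rw [integral_sub_sq]
    simp only [L]
    push_cast
    field_simp
    ring
  calc _ = ∫ x in c + (0 : ℕ) * L..c + n * L, ((Finset.Icc 1 n).image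
          fun j : ℕ => c + (2 * (j : ℝ) - 1) * (d - c) / (2 * n)).inf' hS (fun b => (x - b) ^ 2) := by
        simp only [L, Nat.cast_zero, zero_mul, add_zero]
        congr 1
        field_simp
        ring
    _ ≤ _ := integral_inf'_sub_sq_le_sum _ hS hu fun i hi =>
        Finset.mem_image_of_mem _ (Finset.mem_Icc.2 ⟨i.succ_pos, hi⟩)
    _ = (d - c) ^ 3 / (12 * (n : ℝ) ^ 2) := by
      simp only [hcell, Finset.sum_const, Finset.card_range, nsmul_eq_mul, L]
      field_simp

/-- For the uniform distribution `μ` on `[c,d]`, the set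
`{ c + (2j-1)(d-c)/(2n) : 1 ≤ j ≤ n }` is an optimal set of `n`-means: its distortion
error equals `(d-c)²/(12 n²)`, and any set of at most `n` points has distortion error
at least `(d-c)²/(12 n²)`. -/
theorem optimal_n_means_uniform_interval (c d : ℝ) (hcd : c < d) (n : ℕ) (hn : 1 ≤ n) :
    (∫ x, (⨅ a : ((Finset.Icc 1 n).image
          (fun j : ℕ => c + (2 * (j : ℝ) - 1) * (d - c) / (2 * n)) : Finset ℝ),
        (x - (a : ℝ)) ^ 2)
        ∂((ENNReal.ofReal (d - c))⁻¹ • volume.restrict (Set.Icc c d)))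
      = (d - c) ^ 2 / (12 * (n : ℝ) ^ 2) ∧
    ∀ α : Finset ℝ, α.Nonempty → α.card ≤ n →
      (d - c) ^ 2 / (12 * (n : ℝ) ^ 2) ≤
        ∫ x, (⨅ a : α, (x - (a : ℝ)) ^ 2)
          ∂((ENNReal.ofReal (d - c))⁻¹ • volume.restrict (Set.Icc c d)) := by
  have hlower : ∀ (α : Finset ℝ) (hα : α.Nonempty), α.card ≤ n →
      (d - c) ^ 2 / (12 * (n : ℝ) ^ 2)
        ≤ (d - c)⁻¹ * ∫ x in c..d, α.inf' hα fun a => (x - a) ^ 2 := by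
    intro α hα hαn
    have hαn' : (α.card : ℝ) ≤ n := by exact_mod_cast hαn
    calc (d - c) ^ 2 / (12 * (n : ℝ) ^ 2) = (d - c)⁻¹ * ((d - c) ^ 3 / (12 * (n : ℝ) ^ 2)) := by
          field_simp
      _ ≤ (d - c)⁻¹ * ((d - c) ^ 3 / (12 * (α.card : ℝ) ^ 2)) := by
          have : (0 : ℝ) < α.card := by exact_mod_cast hα.card_pos
          gcongr
      _ ≤ _ := by gcongr; exact cube_div_le_integral_inf'_sub_sq α hα hcd.le
  have hS := (Finset.nonempty_Icc.2 hn).image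
    fun j : ℕ => c + (2 * (j : ℝ) - 1) * (d - c) / (2 * n)
  simp only [integral_uniform_Icc _ hcd.le]
  refine ⟨?_, fun α hα hαn => ?_⟩
  · simp only [iInf_sub_sq_eq_inf' _ hS]
    refine le_antisymm ?_ (hlower _ hS (Finset.card_image_le.trans (by simp)))
    calc _ ≤ (d - c)⁻¹ * ((d - c) ^ 3 / (12 * (n : ℝ) ^ 2)) := by
          gcongr; exact integral_inf'_sub_sq_midpoints_le hcd.le hn hS
      _ = (d - c) ^ 2 / (12 * (n : ℝ) ^ 2) := by field_simp
  · simpa only [iInf_sub_sq_eq_inf' _ hα] using hlower α hα hαn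
end

section
/- The nth quantization error of the uniform distribution on the unit interval [0,1] is 1/(12 n²). -/
/-!
Splitting `[a, b]` into `n` cells of length `h = (b - a) / n` and quantizing each cell by its
midpoint costs `n · h³ / 12 = (b - a)³ / (12 n²)`. Conversely, for any `n` points the set where
the distance `d` to them is `< r` is covered by `n` intervals of length `2r`, so
`|{x ∈ [a, b] | r ≤ d x}| ≥ (b - a) - 2nr`; the layer-cake formula
`∫ d² = ∫₀^∞ 2r |{r ≤ d}| dr` then bounds `∫ d²` below by
`∫₀^{(b-a)/2n} 2r ((b - a) - 2nr) dr = (b - a)³ / (12 n²)`.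
-/

open MeasureTheory Metric Set Finset

lemma iInf_sq_sub_eq_infDist_sq {α : Finset ℝ} (hα : α.Nonempty) (x : ℝ) :
    ⨅ a : α, (x - (a : ℝ)) ^ 2 = infDist x (α : Set ℝ) ^ 2 := by
  have : Nonempty α := hα.coe_sort
  obtain ⟨b, hb⟩ := exists_eq_ciInf_of_finite (f := fun a : α => (x - (a : ℝ)) ^ 2)
  obtain ⟨y, hy, hxy⟩ := α.finite_toSet.isCompact.exists_infDist_eq_dist (coe_nonempty.2 hα) x
  refine le_antisymm ?_ ?_
  · rw [hxy, Real.dist_eq, sq_abs]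
    exact ciInf_le (Set.finite_range _).bddBelow (⟨y, hy⟩ : α)
  · rw [← hb, ← sq_abs (x - _), ← Real.dist_eq]
    gcongr
    · exact infDist_nonneg
    · exact infDist_le_dist_of_mem b.2

lemma integral_sq_sub_midpoint (a b : ℝ) :
    ∫ x in a..b, (x - (a + b) / 2) ^ 2 = (b - a) ^ 3 / 12 := by
  rw [intervalIntegral.integral_comp_sub_right (fun x => x ^ 2), integral_pow]
  ring

lemma integral_infDist_midpoints_sq_le (u : ℕ → ℝ) (hu : Monotone u) (n : ℕ) :
    ∫ x in u 0..u n,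
        infDist x ((range n).image fun i => (u i + u (i + 1)) / 2 : Set ℝ) ^ 2
      ≤ ∑ i ∈ range n, (u (i + 1) - u i) ^ 3 / 12 := by
  set c : ℕ → ℝ := fun i => (u i + u (i + 1)) / 2
  have hcont : Continuous fun x => infDist x ((range n).image c : Set ℝ) ^ 2 :=
    (continuous_infDist_pt _).pow 2
  rw [← intervalIntegral.sum_integral_adjacent_intervals
    fun i _ => hcont.intervalIntegrable (u i) (u (i + 1))]
  refine Finset.sum_le_sum fun i hi => ?_
  rw [← integral_sq_sub_midpoint]
  refine intervalIntegral.integral_mono_on (hu i.le_succ) (hcont.intervalIntegrable _ _)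
    ((by fun_prop : Continuous fun x : ℝ => (x - c i) ^ 2).intervalIntegrable _ _) fun x _ => ?_
  rw [← sq_abs (x - _), ← Real.dist_eq]
  gcongr
  · exact infDist_nonneg
  · exact infDist_le_dist_of_mem (mem_coe.2 (mem_image_of_mem c hi))

lemma volume_setOf_infDist_lt_le {α : Finset ℝ} (hα : α.Nonempty) (r : ℝ) :
    volume {x | infDist x (α : Set ℝ) < r} ≤ ENNReal.ofReal (2 * α.card * r) := by
  have hthick : {x | infDist x (α : Set ℝ) < r} = thickening r (α : Set ℝ) := by
    ext x
    exact (mem_thickening_iff_infDist_lt (coe_nonempty.2 hα)).symm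
  calc volume {x | infDist x (α : Set ℝ) < r}
      = volume (⋃ a ∈ α, ball a r) := by rw [hthick, thickening_eq_biUnion_ball]; simp
    _ ≤ ∑ a ∈ α, volume (ball a r) := measure_biUnion_finset_le _ _
    _ = ENNReal.ofReal (2 * α.card * r) := by
      rw [mul_assoc, mul_left_comm, ENNReal.ofReal_mul (by positivity), ENNReal.ofReal_natCast]
      simp [Real.volume_ball, mul_comm]

lemma ofReal_sub_le_restrict_setOf_le_infDist {α : Finset ℝ} (hα : α.Nonempty) {n : ℕ}
    (hcard : α.card ≤ n) {s : Set ℝ} {L : ℝ} (hL : ENNReal.ofReal L ≤ volume s) {t : ℝ}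
    (ht : 0 ≤ t) :
    ENNReal.ofReal (L - 2 * n * t) ≤ volume.restrict s {x | t ≤ infDist x (α : Set ℝ)} := by
  have hmeas : MeasurableSet {x | t ≤ infDist x (α : Set ℝ)} :=
    measurableSet_le measurable_const (continuous_infDist_pt _).measurable
  have hsmall : volume {x | infDist x (α : Set ℝ) < t} ≤ ENNReal.ofReal (2 * n * t) :=
    (volume_setOf_infDist_lt_le hα t).trans (by gcongr)
  have hsplit : volume s ≤ volume (s ∩ {x | t ≤ infDist x (α : Set ℝ)})
      + volume {x | infDist x (α : Set ℝ) < t} :=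
    (measure_le_inter_add_sdiff _ s _).trans
      (by gcongr; exact fun x hx => show infDist x _ < t from not_le.1 hx.2)
  rw [Measure.restrict_apply hmeas, Set.inter_comm, ENNReal.ofReal_sub _ (by positivity)]
  exact tsub_le_iff_right.2 (hL.trans (hsplit.trans (add_le_add_right hsmall _)))

lemma lintegral_ofReal_sq_eq {X : Type*} [MeasurableSpace X] (μ : Measure X) {f : X → ℝ}
    (hf : 0 ≤ f) (hfm : Measurable f) :
    ∫⁻ x, ENNReal.ofReal (f x ^ 2) ∂μ =
      ∫⁻ t in Ioi 0, μ {x | t ≤ f x} * ENNReal.ofReal (2 * t) := by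
  have hg : Continuous fun t : ℝ => 2 * t := by fun_prop
  rw [← lintegral_comp_eq_lintegral_meas_le_mul_of_measurable μ hf hfm
    (fun _ _ => hg.intervalIntegrable _ _) hg.measurable fun t ht => by positivity]
  refine lintegral_congr fun x => ?_
  rw [intervalIntegral.integral_const_mul, integral_id]
  ring_nf

lemma ofReal_le_setLIntegral_infDist_sq {α : Finset ℝ} (hα : α.Nonempty) {n : ℕ}
    (hcard : α.card ≤ n) {s : Set ℝ} {L : ℝ} (hL0 : 0 ≤ L)
    (hL : ENNReal.ofReal L ≤ volume s) :
    ENNReal.ofReal (L ^ 3 / (12 * n ^ 2)) ≤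
      ∫⁻ x in s, ENNReal.ofReal (infDist x (α : Set ℝ) ^ 2) := by
  have hn : (n : ℝ) ≠ 0 := Nat.cast_ne_zero.2 (hα.card_pos.trans_le hcard).ne'
  have hT : 0 ≤ L / (2 * n) := by positivity
  have hprofile :
      ∫ t in (0 : ℝ)..L / (2 * n), (L - 2 * n * t) * (2 * t) = L ^ 3 / (12 * n ^ 2) := by
    have hexpand (t : ℝ) : (L - 2 * n * t) * (2 * t) = 2 * L * t - 4 * n * t ^ 2 := by ring
    simp only [hexpand]
    rw [intervalIntegral.integral_sub
        ((by fun_prop : Continuous fun t : ℝ => 2 * L * t).intervalIntegrable _ _)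
        ((by fun_prop : Continuous fun t : ℝ => 4 * n * t ^ 2).intervalIntegrable _ _),
      intervalIntegral.integral_const_mul, intervalIntegral.integral_const_mul, integral_id,
      integral_pow]
    simp only [div_pow, mul_pow]
    field_simp
    ring
  have hcont : Continuous fun t : ℝ => (L - 2 * n * t) * (2 * t) := by fun_prop
  have hnonneg : ∀ t ∈ Ioc 0 (L / (2 * n)), 0 ≤ (L - 2 * n * t) * (2 * t) := fun t ht => by
    have := (le_div_iff₀' (by positivity)).1 ht.2
    exact mul_nonneg (by linarith) (by linarith [ht.1])
  calc ENNReal.ofReal (L ^ 3 / (12 * n ^ 2))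
      = ∫⁻ t in Ioc 0 (L / (2 * n)), ENNReal.ofReal ((L - 2 * n * t) * (2 * t)) := by
        rw [← hprofile, intervalIntegral.integral_of_le hT,
          ofReal_integral_eq_lintegral_ofReal
            (hcont.integrableOn_Icc.mono_set Ioc_subset_Icc_self)
            ((ae_restrict_iff' measurableSet_Ioc).2 (.of_forall hnonneg))]
    _ ≤ ∫⁻ t in Ioc 0 (L / (2 * n)),
          volume.restrict s {x | t ≤ infDist x (α : Set ℝ)} * ENNReal.ofReal (2 * t) := by
        refine setLIntegral_mono' measurableSet_Ioc fun t ht => ?_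
        rw [ENNReal.ofReal_mul' (by linarith [ht.1])]
        gcongr
        exact ofReal_sub_le_restrict_setOf_le_infDist hα hcard hL ht.1.le
    _ ≤ ∫⁻ t in Ioi 0,
          volume.restrict s {x | t ≤ infDist x (α : Set ℝ)} * ENNReal.ofReal (2 * t) :=
        lintegral_mono_set Ioc_subset_Ioi_self
    _ = ∫⁻ x in s, ENNReal.ofReal (infDist x (α : Set ℝ) ^ 2) :=
        (lintegral_ofReal_sq_eq _ (fun _ => infDist_nonneg)
          (continuous_infDist_pt _).measurable).symm

lemma div_le_setIntegral_Icc_infDist_sq {α : Finset ℝ} (hα : α.Nonempty) {n : ℕ}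
    (hcard : α.card ≤ n) {a b : ℝ} (hab : a ≤ b) :
    (b - a) ^ 3 / (12 * n ^ 2) ≤ ∫ x in Icc a b, infDist x (α : Set ℝ) ^ 2 := by
  have hint : IntegrableOn (fun x => infDist x (α : Set ℝ) ^ 2) (Icc a b) :=
    ((continuous_infDist_pt _).pow 2).integrableOn_Icc
  rw [← ENNReal.ofReal_le_ofReal_iff
      (setIntegral_nonneg measurableSet_Icc fun _ _ => by positivity),
    ofReal_integral_eq_lintegral_ofReal hint (.of_forall fun _ => by positivity)]
  exact ofReal_le_setLIntegral_infDist_sq hα hcard (by linarith) (Real.volume_Icc ▸ le_rfl)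

lemma exists_card_le_setIntegral_Icc_infDist_sq_le {n : ℕ} (hn : 1 ≤ n) {a b : ℝ}
    (hab : a ≤ b) :
    ∃ α : Finset ℝ, α.Nonempty ∧ α.card ≤ n ∧
      ∫ x in Icc a b, infDist x (α : Set ℝ) ^ 2 ≤ (b - a) ^ 3 / (12 * n ^ 2) := by
  set u : ℕ → ℝ := fun i => a + i * ((b - a) / n)
  have hu : Monotone u := fun i j hij => by simp only [u]; gcongr
  refine ⟨(range n).image fun i => (u i + u (i + 1)) / 2,
    (nonempty_range_iff.2 (by omega)).image _, card_image_le.trans (card_range n).le, ?_⟩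
  have hcell : ∀ i : ℕ, (u (i + 1) - u i) ^ 3 / 12 = (b - a) ^ 3 / (12 * n ^ 3) := fun i => by
    simp only [u]
    push_cast
    field_simp
    ring
  have hends : u 0 = a ∧ u n = b := ⟨by simp [u], by simp only [u]; field_simp; ring⟩
  have hsum := integral_infDist_midpoints_sq_le u hu n
  rw [hends.1, hends.2] at hsum
  rw [integral_Icc_eq_integral_Ioc, ← intervalIntegral.integral_of_le hab]
  refine hsum.trans_eq ?_
  simp only [hcell, sum_const, card_range, nsmul_eq_mul]
  field_simp

/-- The `n`th quantization error of the uniform distribution on `[0,1]` is `1/(12 n²)`. -/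
theorem quantization_error_uniform_unit_interval (n : ℕ) (hn : 1 ≤ n) :
    sInf { V : ℝ | ∃ α : Finset ℝ, α.Nonempty ∧ α.card ≤ n ∧
        V = ∫ x in Set.Icc (0 : ℝ) 1, (⨅ a : α, (x - (a : ℝ)) ^ 2) }
      = 1 / (12 * (n : ℝ) ^ 2) := by
  have hlower (α : Finset ℝ) (hα : α.Nonempty) (hcard : α.card ≤ n) :
      1 / (12 * (n : ℝ) ^ 2) ≤ ∫ x in Icc (0 : ℝ) 1, ⨅ a : α, (x - (a : ℝ)) ^ 2 := by
    simp_rw [iInf_sq_sub_eq_infDist_sq hα]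
    simpa using div_le_setIntegral_Icc_infDist_sq hα hcard zero_le_one
  obtain ⟨α, hα, hcard, hupper⟩ :=
    exists_card_le_setIntegral_Icc_infDist_sq_le hn (zero_le_one' ℝ)
  refine IsLeast.csInf_eq ⟨⟨α, hα, hcard, le_antisymm (hlower α hα hcard) ?_⟩, ?_⟩
  · simp_rw [iInf_sq_sub_eq_infDist_sq hα]
    simpa using hupper
  · rintro _ ⟨β, hβ, hβcard, rfl⟩
    exact hlower β hβ hβcard
end

section
/- Fix m ≥ 3 and let ℓ = 2 sin(π/m). For k ≥ 2 and 0 < r ≤ ℓ/2, define F(r) = (1/24)·csc(π/m)·( r³(3 cos(2π/m) + 5) + (8/(k-1)²)(sin(π/m) - r)³ ). Then F attains its minimum over (0, ℓ/2] at r* = 4 sin(π/m) / ( 2(k-1)√(3 cos²(π/m) + 1) + 4 ), and F(r*) = 2 sin²(π/m)(3 cos(2π/m) + 5) / ( 3·( k√(6 cos(2π/m) + 10) − √(6 cos(2π/m) + 10) + 4 )² ). -/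
open Real

set_option maxHeartbeats 2000000 in
/-- For `m ≥ 3`, `k ≥ 2`, `ℓ = 2 sin(π/m)`, the distortion function
`F(r) = (1/24) csc(π/m) ( r³(3cos(2π/m)+5) + (8/(k-1)²)(sin(π/m)-r)³ )`
attains its minimum over `(0, ℓ/2]` at
`r* = 4 sin(π/m)/(2(k-1)√(3cos²(π/m)+1) + 4)`, with minimum value
`2 sin²(π/m)(3cos(2π/m)+5) / (3 (k√(6cos(2π/m)+10) - √(6cos(2π/m)+10) + 4)²)`. -/
theorem distortion_min (m k : ℕ) (hm : 3 ≤ m) (hk : 2 ≤ k)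
    (ℓ : ℝ) (hℓ : ℓ = 2 * Real.sin (π / m))
    (F : ℝ → ℝ)
    (hF : ∀ r : ℝ, F r = (1 / 24) * (Real.sin (π / m))⁻¹ *
      (r ^ 3 * (3 * Real.cos (2 * π / m) + 5) +
        (8 / ((k : ℝ) - 1) ^ 2) * (Real.sin (π / m) - r) ^ 3))
    (rstar : ℝ)
    (hrstar : rstar = 4 * Real.sin (π / m) /
      (2 * ((k : ℝ) - 1) * Real.sqrt (3 * Real.cos (π / m) ^ 2 + 1) + 4)) :
    rstar ∈ Set.Ioc 0 (ℓ / 2) ∧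
    (∀ r ∈ Set.Ioc 0 (ℓ / 2), F rstar ≤ F r) ∧
    F rstar = 2 * Real.sin (π / m) ^ 2 * (3 * Real.cos (2 * π / m) + 5) /
      (3 * ((k : ℝ) * Real.sqrt (6 * Real.cos (2 * π / m) + 10) -
        Real.sqrt (6 * Real.cos (2 * π / m) + 10) + 4) ^ 2) := by
  have hm' : (3:ℝ) ≤ (m:ℝ) := by exact_mod_cast hm
  have hmpos : (0:ℝ) < (m:ℝ) := by linarith
  have hx1 : 0 < π / m := div_pos pi_pos hmpos
  have hx2 : π / m < π := by
    rw [div_lt_iff₀ hmpos]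
    nlinarith [pi_pos]
  have hs : 0 < Real.sin (π / m) := Real.sin_pos_of_pos_of_lt_pi hx1 hx2
  set s := Real.sin (π / m) with hsdef
  set c := Real.cos (π / m) with hcdef
  have hcos2 : Real.cos (2 * π / m) = 2 * c ^ 2 - 1 := by
    rw [show (2 * π / (m:ℝ)) = 2 * (π / m) by ring, Real.cos_two_mul]
  set q := Real.sqrt (3 * c ^ 2 + 1) with hqdef
  have hq2 : q ^ 2 = 3 * c ^ 2 + 1 := Real.sq_sqrt (by positivity)
  have hqnn : 0 ≤ q := Real.sqrt_nonneg _
  have hq : 1 ≤ q := by nlinarith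
  have hK2 : (2:ℝ) ≤ (k:ℝ) := by exact_mod_cast hk
  set K := (k:ℝ) - 1 with hKdef
  have hK : (1:ℝ) ≤ K := by simp [hKdef]; linarith
  clear_value s c q K
  have hKne : K ≠ 0 := by linarith
  have hD : (0:ℝ) < K * q + 2 := by nlinarith
  have hDne : K * q + 2 ≠ 0 := ne_of_gt hD
  have hrs : rstar = 2 * s / (K * q + 2) := by
    rw [hrstar, show 2 * K * q + 4 = 2 * (K * q + 2) by ring,
      show 4 * s = 2 * (2 * s) by ring,
      mul_div_mul_left _ _ (by norm_num : (2:ℝ) ≠ 0)]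
  have hsq : Real.sqrt (6 * Real.cos (2 * π / m) + 10) = 2 * q := by
    rw [hcos2, show 6 * (2 * c ^ 2 - 1) + 10 = (2:ℝ) ^ 2 * (3 * c ^ 2 + 1) by ring,
      Real.sqrt_mul (by positivity), Real.sqrt_sq (by norm_num), ← hqdef]
  have hrpos : 0 < rstar := by rw [hrs]; positivity
  have hrle : rstar ≤ s := by
    rw [hrs, div_le_iff₀ hD]
    nlinarith [mul_nonneg (le_of_lt hs) (mul_nonneg (by linarith : (0:ℝ) ≤ K) hqnn)]
  have hl2 : ℓ / 2 = s := by rw [hℓ]; ring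
  have hqpos : (0:ℝ) < q := by linarith
  have ha : (0:ℝ) < 2 * q ^ 2 := by positivity
  have hb : (0:ℝ) < 8 / K ^ 2 := by
    apply div_pos (by norm_num)
    nlinarith
  have hA : 3 * (2 * c ^ 2 - 1) + 5 = 2 * q ^ 2 := by rw [hq2]; ring
  have h1 : 2 * q ^ 2 * rstar ^ 2 = 8 / K ^ 2 * (s - rstar) ^ 2 := by
    rw [hrs]
    field_simp
    ring
  have key : ∀ x : ℝ, 0 < x → x ≤ s →
      rstar ^ 3 * (2 * q ^ 2) + 8 / K ^ 2 * (s - rstar) ^ 3 ≤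
      x ^ 3 * (2 * q ^ 2) + 8 / K ^ 2 * (s - x) ^ 3 := by
    intro x hx hxs
    have h0 : 2 * q ^ 2 * rstar ^ 2 - 8 / K ^ 2 * (s - rstar) ^ 2 = 0 := by linarith
    have e : x ^ 3 * (2 * q ^ 2) + 8 / K ^ 2 * (s - x) ^ 3 -
        (rstar ^ 3 * (2 * q ^ 2) + 8 / K ^ 2 * (s - rstar) ^ 3)
        = (2 * q ^ 2) * ((x - rstar) ^ 2 * (x + 2 * rstar)) +
          (8 / K ^ 2) * ((x - rstar) ^ 2 * ((s - x) + 2 * (s - rstar))) +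
          3 * (x - rstar) * (2 * q ^ 2 * rstar ^ 2 - 8 / K ^ 2 * (s - rstar) ^ 2) := by
      ring
    rw [h0, mul_zero] at e
    have t1 : 0 ≤ (2 * q ^ 2) * ((x - rstar) ^ 2 * (x + 2 * rstar)) :=
      mul_nonneg ha.le (mul_nonneg (sq_nonneg _) (by linarith))
    have t2 : 0 ≤ (8 / K ^ 2) * ((x - rstar) ^ 2 * ((s - x) + 2 * (s - rstar))) :=
      mul_nonneg hb.le (mul_nonneg (sq_nonneg _) (by linarith))
    linarith
  refine ⟨⟨hrpos, by rw [hl2]; exact hrle⟩, ?_, ?_⟩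
  · intro r hr
    rw [hl2] at hr
    obtain ⟨hr0, hr1⟩ := hr
    rw [hF r, hF rstar, hcos2, hA]
    exact mul_le_mul_of_nonneg_left (key r hr0 hr1) (by positivity)
  · rw [hF rstar, hrs, hsq, hcos2]
    rw [show (k:ℝ) * (2 * q) - 2 * q + 4 = 2 * (K * q + 2) by rw [hKdef]; ring, hA]
    have hsne : s ≠ 0 := ne_of_gt hs
    field_simp
    ring
end

section
/- Fix m ≥ 3. Let a₁ = (1 - (r/2)·sin(π/m), 0). With vertices a_j of the regular m-gon inscribed in the unit circle (a₁-vertex at (1,0)), parametrize side A₁A₂ by M₁(t) = (1-t)·(1,0) + t·(cos(2π/m), sin(2π/m)). Then 2·∫₀^{r/ℓ} ‖M₁(t) − a₁‖² dt = (1/24)·r³·(3 cos(2π/m) + 5)·csc(π/m), where ℓ = 2 sin(π/m) and 0 ≤ r ≤ ℓ. -/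
/-!
On a segment `(1 - t) • P + t • Q`, the squared distance to a point `a` is the quadratic
`‖Q - P‖² t² + 2⟪Q - P, P - a⟫ t + ‖P - a‖²`. For the side of the regular `m`-gon and the
point `a₁`, with `s = sin (π / m)`, the coefficients are `4 s²`, `-2 r s³` and `r² s² / 4`;
integrating up to `r / (2 s)` gives `r³ / (6 s) - r³ s / 8`, which is half the right-hand side
once `cos (2π / m) = 1 - 2 s²`.
-/

open Real MeasureTheory

theorem integral_Icc_quadratic {T : ℝ} (hT : 0 ≤ T) (a b c : ℝ) :
    ∫ t in Set.Icc 0 T, (a * t ^ 2 + b * t + c) = a * T ^ 3 / 3 + b * T ^ 2 / 2 + c * T := by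
  have hcont : ∀ f : ℝ → ℝ, Continuous f → IntervalIntegrable f volume 0 T :=
    fun f hf => hf.intervalIntegrable 0 T
  rw [integral_Icc_eq_integral_Ioc, ← intervalIntegral.integral_of_le hT,
    intervalIntegral.integral_add (hcont _ (by fun_prop)) (hcont _ (by fun_prop)),
    intervalIntegral.integral_add (hcont _ (by fun_prop)) (hcont _ (by fun_prop)),
    intervalIntegral.integral_const_mul, intervalIntegral.integral_const_mul b (fun x => x)]
  simp only [integral_pow, integral_id, intervalIntegral.integral_const, smul_eq_mul]
  ring

section Segment
variable {E : Type*} [NormedAddCommGroup E] [InnerProductSpace ℝ E]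

theorem norm_segment_sub_sq (P Q a : E) (t : ℝ) :
    ‖(1 - t) • P + t • Q - a‖ ^ 2
      = ‖Q - P‖ ^ 2 * t ^ 2 + 2 * inner ℝ (Q - P) (P - a) * t + ‖P - a‖ ^ 2 := by
  have : (1 - t) • P + t • Q - a = t • (Q - P) + (P - a) := by module
  rw [this, norm_add_sq_real, norm_smul, real_inner_smul_left, mul_pow, Real.norm_eq_abs, sq_abs]
  ring

theorem integral_Icc_norm_segment_sub_sq (P Q a : E) {T : ℝ} (hT : 0 ≤ T) :
    ∫ t in Set.Icc 0 T, ‖(1 - t) • P + t • Q - a‖ ^ 2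
      = ‖Q - P‖ ^ 2 * T ^ 3 / 3 + inner ℝ (Q - P) (P - a) * T ^ 2 + ‖P - a‖ ^ 2 * T := by
  simp_rw [norm_segment_sub_sq, integral_Icc_quadratic hT]
  ring

end Segment

namespace EuclideanSpace

theorem norm_sq_vec2 (x y : ℝ) : ‖!₂[x, y]‖ ^ 2 = x ^ 2 + y ^ 2 := by
  simp [real_norm_sq_eq, Fin.sum_univ_two]

theorem inner_vec2 (x y x' y' : ℝ) :
    inner ℝ !₂[x, y] !₂[x', y'] = x * x' + y * y' := by
  simp [PiLp.inner_apply, Fin.sum_univ_two, mul_comm]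

theorem vec2_sub (x y x' y' : ℝ) :
    (!₂[x, y] - !₂[x', y'] : EuclideanSpace ℝ (Fin 2)) = !₂[x - x', y - y'] := by
  ext i; fin_cases i <;> simp

end EuclideanSpace

open EuclideanSpace in
theorem norm_chord_sq (θ : ℝ) :
    ‖(!₂[cos (2 * θ), sin (2 * θ)] : EuclideanSpace ℝ (Fin 2)) - !₂[1, 0]‖ ^ 2 = (2 * sin θ) ^ 2 := by
  rw [vec2_sub, norm_sq_vec2, cos_two_mul, sin_two_mul]
  linear_combination (4 * cos θ ^ 2 - 4) * sin_sq_add_cos_sq θ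

open EuclideanSpace in
theorem corner_distortion_general (m : ℕ) (hm : 3 ≤ m) (ℓ r : ℝ)
    (hℓ : ℓ = 2 * Real.sin (π / m)) (hr0 : 0 ≤ r)
    (a₁ : EuclideanSpace ℝ (Fin 2))
    (ha₁ : a₁ = ![1 - r / 2 * Real.sin (π / m), 0])
    (M₁ : ℝ → EuclideanSpace ℝ (Fin 2))
    (hM₁ : ∀ t, M₁ t = (1 - t) • (!₂[1, 0] : EuclideanSpace ℝ (Fin 2)) +
      t • (!₂[Real.cos (2 * π / m), Real.sin (2 * π / m)] : EuclideanSpace ℝ (Fin 2))) :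
    2 * ∫ t in Set.Icc 0 (r / ℓ), ‖M₁ t - a₁‖ ^ 2
      = (1 / 24) * r ^ 3 * (3 * Real.cos (2 * π / m) + 5) * (Real.sin (π / m))⁻¹ := by
  set θ := π / m
  have hθ : 2 * π / m = 2 * θ := mul_div_assoc _ _ _
  have hs : 0 < sin θ := by
    have hm' : (3 : ℝ) ≤ m := by exact_mod_cast hm
    refine sin_pos_of_pos_of_lt_pi (by positivity) ((div_lt_iff₀ (by positivity)).2 ?_)
    nlinarith [pi_pos]
  have ha₁' : a₁ = !₂[1 - r / 2 * sin θ, 0] := congrArg (WithLp.toLp 2) ha₁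
  simp_rw [hM₁, ha₁', hθ]
  rw [integral_Icc_norm_segment_sub_sq _ _ _ (by rw [hℓ]; positivity), norm_chord_sq,
    vec2_sub, vec2_sub, inner_vec2, norm_sq_vec2, hℓ, cos_two_mul, cos_sq']
  field_simp
  ring

/-- Equation (1) of the paper: with `a₁ = (1 - (r/2) sin(π/m), 0)` and
`M₁(t) = (1-t)(1,0) + t(cos(2π/m), sin(2π/m))`, one has
`2 ∫₀^{r/ℓ} ‖M₁(t) - a₁‖² dt = (1/24) r³ (3cos(2π/m)+5) csc(π/m)`
for `ℓ = 2 sin(π/m)` and `0 ≤ r ≤ ℓ`. -/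
theorem corner_distortion (m : ℕ) (hm : 3 ≤ m) (ℓ r : ℝ)
    (hℓ : ℓ = 2 * Real.sin (π / m)) (hr0 : 0 ≤ r) (hrℓ : r ≤ ℓ)
    (a₁ : EuclideanSpace ℝ (Fin 2))
    (ha₁ : a₁ = ![1 - r / 2 * Real.sin (π / m), 0])
    (M₁ : ℝ → EuclideanSpace ℝ (Fin 2))
    (hM₁ : ∀ t, M₁ t = (1 - t) • (!₂[1, 0] : EuclideanSpace ℝ (Fin 2)) +
      t • (!₂[Real.cos (2 * π / m), Real.sin (2 * π / m)] : EuclideanSpace ℝ (Fin 2))) :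
    2 * ∫ t in Set.Icc 0 (r / ℓ), ‖M₁ t - a₁‖ ^ 2
      = (1 / 24) * r ^ 3 * (3 * Real.cos (2 * π / m) + 5) * (Real.sin (π / m))⁻¹ :=
  corner_distortion_general m hm ℓ r hℓ hr0 a₁ ha₁ M₁ hM₁
end

section
/- Fix m ≥ 3, let ℓ = 2 sin(π/m), let M(t) parametrize a side of the regular m-gon inscribed in the unit circle (M(t) = (1-t)A + tB with ‖B−A‖ = ℓ), and let 0 ≤ r < ℓ/2 and k ≥ 2. Then (k-1)·∫ from r/ℓ to r/ℓ + (1/(k-1))(1 − 2r/ℓ) of ‖M(t) − M(r/ℓ + (1/(2(k-1)))(1 − 2r/ℓ))‖² dt = (1/(3(k-1)²))·csc(π/m)·(sin(π/m) − r)³. -/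
set_option maxHeartbeats 1000000


open Real

/-- Equation (2) of the paper: with `M(t) = (1-t)A + tB`, `‖B - A‖ = ℓ = 2 sin(π/m)`,
`0 ≤ r < ℓ/2`, and integer `k ≥ 2`,
`(k-1) ∫_{r/ℓ}^{r/ℓ + (1/(k-1))(1-2r/ℓ)} ‖M t - M(r/ℓ + (1/(2(k-1)))(1-2r/ℓ))‖² dt
  = (1/(3(k-1)²)) csc(π/m) (sin(π/m) - r)³`. -/
theorem side_distortion (m k : ℕ) (hm : 3 ≤ m) (hk : 2 ≤ k)
    (A B : EuclideanSpace ℝ (Fin 2)) (ℓ : ℝ) (hℓ : ℓ = 2 * Real.sin (π / m))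
    (hAB : ‖B - A‖ = ℓ)
    (M : ℝ → EuclideanSpace ℝ (Fin 2)) (hM : ∀ t, M t = (1 - t) • A + t • B)
    (r : ℝ) (hr0 : 0 ≤ r) (hr : r < ℓ / 2) :
    ((k : ℝ) - 1) *
      ∫ t in Set.Icc (r / ℓ) (r / ℓ + (1 / ((k : ℝ) - 1)) * (1 - 2 * r / ℓ)),
        ‖M t - M (r / ℓ + (1 / (2 * ((k : ℝ) - 1))) * (1 - 2 * r / ℓ))‖ ^ 2
      = (1 / (3 * ((k : ℝ) - 1) ^ 2)) * (Real.sin (π / m))⁻¹ *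
          (Real.sin (π / m) - r) ^ 3 := by
  have hm0 : (0:ℝ) < m := by positivity
  have hs : 0 < Real.sin (π / m) := by
    apply Real.sin_pos_of_pos_of_lt_pi
    · positivity
    · exact div_lt_self Real.pi_pos (by exact_mod_cast (by omega : 1 < m))
  have hℓ0 : 0 < ℓ := by rw [hℓ]; positivity
  have hkk : (1:ℝ) ≤ (k:ℝ) - 1 := by
    have : (2:ℝ) ≤ k := by exact_mod_cast hk
    linarith
  have hk0 : ((k:ℝ) - 1) ≠ 0 := by linarith
  set a := r / ℓ with ha
  set L := (1 / ((k : ℝ) - 1)) * (1 - 2 * r / ℓ) with hL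
  set c := a + (1 / (2 * ((k : ℝ) - 1))) * (1 - 2 * r / ℓ) with hc
  have hLpos : 0 ≤ L := by
    have h1 : 0 < 1 - 2 * r / ℓ := by
      rw [sub_pos, div_lt_one hℓ0]; linarith
    positivity
  have hab : a ≤ a + L := by linarith
  have key : ∀ t : ℝ, ‖M t - M c‖ ^ 2 = ℓ ^ 2 * (t - c) ^ 2 := by
    intro t
    rw [hM, hM]
    have h : (1 - t) • A + t • B - ((1 - c) • A + c • B) = (t - c) • (B - A) := by
      module
    rw [h, norm_smul, hAB, Real.norm_eq_abs, mul_pow, sq_abs]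
    ring
  simp_rw [key]
  rw [MeasureTheory.integral_Icc_eq_integral_Ioc,
    ← intervalIntegral.integral_of_le hab, intervalIntegral.integral_const_mul]
  have hint : ∫ t in a..(a + L), (t - c) ^ 2 =
      ((a + L - c) ^ 3 - (a - c) ^ 3) / 3 := by
    rw [intervalIntegral.integral_comp_sub_right (fun x => x ^ 2) c,
      integral_pow]
    norm_num
  rw [hint]
  have hℓne : ℓ ≠ 0 := ne_of_gt hℓ0
  simp only [hc, hL, ha]
  rw [hℓ] at hℓne ⊢
  have hs' : Real.sin (π / m) ≠ 0 := ne_of_gt hs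
  field_simp
  ring
end

section
/- Let m ≥ 3 and let V(k) = 2 sin²(π/m)(3 cos(2π/m)+5) / (3( k√(6 cos(2π/m)+10) − √(6 cos(2π/m)+10) + 4 )²) for integers k ≥ 2. For each n ≥ 2m let ℓ(n) be the unique integer with m·ℓ(n) ≤ n < m·(ℓ(n)+1). If a sequence (W_n) satisfies V(ℓ(n)+1) ≤ W_n ≤ V(ℓ(n)) for all n ≥ 2m, then n² W_n → (1/3) m² sin²(π/m) as n → ∞. -/
/-!
The closed form is an inverse square of an affine function of `k`: `V k = A / (k s + (4 - s))²`
with `s = √(6 cos(2π/m) + 10)` and `A = 2 sin²(π/m) (3 cos(2π/m) + 5) / 3`. Since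
`⌊n/m⌋ / n → 1/m`, both `n² V(⌊n/m⌋)` and `n² V(⌊n/m⌋ + 1)` tend to `A m² / s²`, which is
`m² sin²(π/m) / 3` because `s² = 2 (3 cos(2π/m) + 5)`; `n² W n` is squeezed between them.
-/

open Real Filter Topology

theorem tendsto_natCast_div_div_natCast {m : ℕ} (hm : 0 < m) :
    Tendsto (fun n : ℕ => ((n / m : ℕ) : ℝ) / n) atTop (𝓝 (m : ℝ)⁻¹) := by
  have hmR : (0 : ℝ) < m := by exact_mod_cast hm
  have hfloor : Tendsto (fun n : ℕ => (⌊(n : ℝ) / m⌋₊ : ℝ) / ((n : ℝ) / m)) atTop (𝓝 1) :=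
    tendsto_nat_floor_div_atTop.comp
      (tendsto_natCast_atTop_atTop.atTop_div_const hmR)
  simpa [Nat.floor_div_eq_div, div_div, div_mul_cancel₀ _ hmR.ne'] using
    hfloor.div_const (m : ℝ)

theorem tendsto_natCast_div_natCast_div_mul_add {m : ℕ} (hm : 0 < m) {s : ℝ} (hs : s ≠ 0)
    (c : ℝ) :
    Tendsto (fun n : ℕ => (n : ℝ) / ((n / m : ℕ) * s + c)) atTop (𝓝 (m / s)) := by
  have hden : Tendsto (fun n : ℕ => ((n / m : ℕ) : ℝ) / n * s + c * (1 / n)) atTop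
      (𝓝 ((m : ℝ)⁻¹ * s + c * 0)) :=
    ((tendsto_natCast_div_div_natCast hm).mul_const s).add
      (tendsto_one_div_atTop_nhds_zero_nat.const_mul c)
  have hlim : (m : ℝ)⁻¹ * s ≠ 0 := mul_ne_zero (by positivity) hs
  convert hden.inv₀ (by simpa using hlim) using 1
  · ext n
    rw [← inv_div]
    congr 1
    ring
  · rw [mul_zero, add_zero, inv_mul_eq_div, inv_div]

theorem tendsto_sq_mul_comp_div_add {V : ℕ → ℝ} {A s c : ℝ} {k₀ m : ℕ} (hm : 0 < m)
    (hs : s ≠ 0) (hV : ∀ k, k₀ ≤ k → V k = A / (k * s + c) ^ 2) (j : ℕ) :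
    Tendsto (fun n : ℕ => (n : ℝ) ^ 2 * V (n / m + j)) atTop (𝓝 (A * (m / s) ^ 2)) := by
  have hlim := ((tendsto_natCast_div_natCast_div_mul_add hm hs (j * s + c)).pow 2).const_mul A
  refine hlim.congr' ?_
  filter_upwards [eventually_ge_atTop (k₀ * m)] with n hn
  have hk : k₀ ≤ n / m + j := ((Nat.le_div_iff_mul_le hm).mpr hn).trans (Nat.le_add_right _ _)
  rw [hV _ hk, div_pow]
  push_cast
  ring

/-- Squeeze argument of Theorem 2: with `ℓ(n) = ⌊n/m⌋`, if `V(ℓ(n)+1) ≤ W n ≤ V(ℓ(n))`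
for all `n ≥ 2m`, then `n² W n → (1/3) m² sin²(π/m)`. -/
theorem squeeze_quantization_coefficient (m : ℕ) (hm : 3 ≤ m) (V : ℕ → ℝ)
    (hV : ∀ k : ℕ, 2 ≤ k → V k =
      2 * Real.sin (π / m) ^ 2 * (3 * Real.cos (2 * π / m) + 5) /
        (3 * ((k : ℝ) * Real.sqrt (6 * Real.cos (2 * π / m) + 10) -
          Real.sqrt (6 * Real.cos (2 * π / m) + 10) + 4) ^ 2))
    (W : ℕ → ℝ)
    (hW : ∀ n : ℕ, 2 * m ≤ n → V (n / m + 1) ≤ W n ∧ W n ≤ V (n / m)) :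
    Tendsto (fun n : ℕ => (n : ℝ) ^ 2 * W n) atTop
      (nhds ((1 / 3) * (m : ℝ) ^ 2 * Real.sin (π / m) ^ 2)) := by
  set x := cos (2 * π / m)
  set s := √(6 * x + 10)
  have hx : 0 < 3 * x + 5 := by linarith [neg_one_le_cos (2 * π / m)]
  have hs2 : s ^ 2 = 2 * (3 * x + 5) := by rw [sq_sqrt (by linarith)]; ring
  have hs : s ≠ 0 := (sqrt_pos.mpr (by linarith)).ne'
  have hV' : ∀ k, 2 ≤ k →
      V k = 2 * sin (π / m) ^ 2 * (3 * x + 5) / 3 / (k * s + (4 - s)) ^ 2 := by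
    intro k hk
    rw [hV k hk, div_div, add_sub_assoc', sub_add_eq_add_sub]
  have hlimit : 2 * sin (π / m) ^ 2 * (3 * x + 5) / 3 * (m / s) ^ 2 =
      1 / 3 * (m : ℝ) ^ 2 * sin (π / m) ^ 2 := by
    rw [div_pow, hs2]
    field_simp
  have hm0 : 0 < m := by omega
  rw [← hlimit]
  refine tendsto_of_tendsto_of_tendsto_of_le_of_le' (tendsto_sq_mul_comp_div_add hm0 hs hV' 1)
    (tendsto_sq_mul_comp_div_add hm0 hs hV' 0) ?_ ?_ <;>
    filter_upwards [eventually_ge_atTop (2 * m)] with n hn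
  · exact mul_le_mul_of_nonneg_left (hW n hn).1 (sq_nonneg _)
  · exact mul_le_mul_of_nonneg_left (hW n hn).2 (sq_nonneg _)
end
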